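/- Let n ≥ 2, s ∈ (0,1), σ ∈ (−1,1), and fix r, δ > 0, and set B := B_{r+δ}. Let E ⊆ H be a local minimizer of the fractional capillarity energy in H, and let E_k ⊆ H be a sequence of local minimizers in H with χ_{E_k} → χ_E in L¹_loc(ℝⁿ). Then limsup_{k→∞} [ 𝓘_s(E_k B, E_k^c H) + 𝓘_s(E_k B^c, E_k^c B H) ] ≤ 𝓘_s(E B, E^c H) + 𝓘_s(E B^c, E^c B H). -/

import Mathlib

open MeasureTheory Metric Set Filter
open scoped ENNReal NNReal Pointwise

noncomputable section

/-- `ℝⁿ` with the Euclidean norm. -/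
abbrev Rn (n : ℕ) := EuclideanSpace ℝ (Fin n)

/-- The fractional interaction `𝓘_s(A,B)` (`ℝ≥0∞`-valued). -/
def frI (n : ℕ) (s : ℝ) (A B : Set (Rn n)) : ℝ≥0∞ :=
  ∫⁻ p in A ×ˢ B, ENNReal.ofReal (‖p.1 - p.2‖ ^ (-((n : ℝ) + s)))

/-- The fractional interaction `𝓘_s(A,B)` (real-valued). -/
def frIr (n : ℕ) (s : ℝ) (A B : Set (Rn n)) : ℝ := (frI n s A B).toReal

/-- The last coordinate `x_n` of a point of `ℝⁿ`. -/
def lastCoord (n : ℕ) (x : Rn n) : ℝ :=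
  if h : 0 < n then x ⟨n - 1, Nat.sub_lt h one_pos⟩ else 0

/-- The upper half-space `H = {x ∈ ℝⁿ : x_n > 0}`. -/
def halfSpace (n : ℕ) : Set (Rn n) := {x | 0 < lastCoord n x}

/-- `E ⊆ H` is a local minimizer of the fractional capillarity energy in `H`. -/
def LocalMin (n : ℕ) (s σ : ℝ) (E : Set (Rn n)) : Prop :=
  ∀ R : ℝ, 0 < R →
    frI n s (E ∩ ball 0 R) (Eᶜ ∩ ball 0 R) < ⊤ ∧
    ∀ F : Set (Rn n), MeasurableSet F → F ⊆ halfSpace n →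
      F \ ball 0 R = E \ ball 0 R →
      frIr n s (E ∩ ball 0 R) (Eᶜ ∩ halfSpace n)
          + frIr n s (E ∩ (ball 0 R)ᶜ) (Eᶜ ∩ ball 0 R ∩ halfSpace n)
          + σ * frIr n s (E ∩ ball 0 R) (halfSpace n)ᶜ
        ≤ frIr n s (F ∩ ball 0 R) (Fᶜ ∩ halfSpace n)
          + frIr n s (F ∩ (ball 0 R)ᶜ) (Fᶜ ∩ ball 0 R ∩ halfSpace n)
          + σ * frIr n s (F ∩ ball 0 R) (halfSpace n)ᶜ

/-- The vertical coordinate `t` of a point of `ℝ^{n+1}`. -/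
def tcoord (n : ℕ) (X : Rn (n + 1)) : ℝ := X (Fin.last n)

/-- The horizontal part `x` of a point of `ℝ^{n+1}`. -/
def xpart (n : ℕ) (X : Rn (n + 1)) : Rn n := WithLp.toLp 2 (fun i : Fin n => X i.castSucc)

/-- The point `(x,t) ∈ ℝ^{n+1}`. -/
def emb (n : ℕ) (x : Rn n) (t : ℝ) : Rn (n + 1) :=
  WithLp.toLp 2 (Fin.snoc (α := fun _ : Fin (n + 1) => ℝ) (fun i => x i) t)

/-- The open upper half-space `ℝ^{n+1}_+ = {t > 0}`. -/
def upperHalf (n : ℕ) : Set (Rn (n + 1)) := {X | 0 < tcoord n X}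

/-- The fractional Poisson kernel `𝐏_s(x,t)`, normalized so that
`∫ 𝐏_s(x,t) dx = 1` for all `t > 0`. -/
def poissonKer (n : ℕ) (s : ℝ) (x : Rn n) (t : ℝ) : ℝ :=
  (∫ z : Rn n, (‖z‖ ^ 2 + 1) ^ (-(((n : ℝ) + s) / 2)))⁻¹ * t ^ s *
    (‖x‖ ^ 2 + t ^ 2) ^ (-(((n : ℝ) + s) / 2))

/-- The `s`-extension `𝐄_u` of a function `u : ℝⁿ → ℝ`. -/
def extu (n : ℕ) (s : ℝ) (u : Rn n → ℝ) (X : Rn (n + 1)) : ℝ :=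
  ∫ y, u y * poissonKer n s (xpart n X - y) (tcoord n X)

/-- The `s`-extension `𝐄_E = 𝐄_{χ_E}` of a set `E ⊆ ℝⁿ`. -/
def extE (n : ℕ) (s : ℝ) (E : Set (Rn n)) : Rn (n + 1) → ℝ :=
  extu n s (E.indicator fun _ => (1 : ℝ))

/-- The energy `𝓕_{s,σ}(U,Ω)`. -/
def energy (n : ℕ) (s σ : ℝ) (U : Rn (n + 1) → ℝ) (Ω : Set (Rn (n + 1))) : ℝ :=
  (∫ X in Ω ∩ upperHalf n, tcoord n X ^ (1 - s) * ‖fderiv ℝ U X‖ ^ 2)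
    + (σ - 1) *
      ∫ p in {x : Rn n | emb n x 0 ∈ Ω} ×ˢ (halfSpace n)ᶜ,
        U (emb n p.1 0) * ‖p.1 - p.2‖ ^ (-((n : ℝ) + s))

/-- The monotonicity quantity `Φ_E(r) = r^{s-n} 𝓕_{s,σ}(𝐄_E, 𝓑_r)`. -/
def Phi (n : ℕ) (s σ : ℝ) (E : Set (Rn n)) (r : ℝ) : ℝ :=
  r ^ (s - (n : ℝ)) * energy n s σ (extE n s E) (ball (0 : Rn (n + 1)) r)

/-- The fractional perimeter `Per_s(F,ω)` (real-valued). -/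
def perS (n : ℕ) (s : ℝ) (F ω : Set (Rn n)) : ℝ :=
  frIr n s (F ∩ ω) (Fᶜ ∩ ω) + frIr n s (F ∩ ω) (Fᶜ ∩ ωᶜ) + frIr n s (F ∩ ωᶜ) (Fᶜ ∩ ω)

/-- The fractional perimeter `Per_s(F,ω)` (`ℝ≥0∞`-valued). -/
def perSE (n : ℕ) (s : ℝ) (F ω : Set (Rn n)) : ℝ≥0∞ :=
  frI n s (F ∩ ω) (Fᶜ ∩ ω) + frI n s (F ∩ ω) (Fᶜ ∩ ωᶜ) + frI n s (F ∩ ωᶜ) (Fᶜ ∩ ω)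

/-- `Per_{s,σ}(F,B_R)`. -/
def perSigma (n : ℕ) (s σ : ℝ) (F : Set (Rn n)) (R : ℝ) : ℝ :=
  perS n s F (ball 0 R ∩ halfSpace n) + (σ - 1) * frIr n s (F ∩ ball 0 R) (halfSpace n)ᶜ

/-- The fractional capillarity energy `𝓒_{s,σ}(E,ω)`. -/
def capEnergy (n : ℕ) (s σ : ℝ) (E ω : Set (Rn n)) : ℝ :=
  frIr n s E (ω \ E) + σ * frIr n s E ωᶜ

/-- A set `Ω ⊆ ℝ^{n+1}` has Lipschitz boundary: near each boundary point, after an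
isometry of `ℝ^{n+1}`, the set is the region above the graph of a Lipschitz function. -/
def HasLipschitzBoundary (n : ℕ) (Ω : Set (Rn (n + 1))) : Prop :=
  ∀ p ∈ frontier Ω, ∃ (g : Rn (n + 1) ≃ᵢ Rn (n + 1)) (f : Rn n → ℝ) (K : ℝ≥0) (ε : ℝ),
    0 < ε ∧ LipschitzWith K f ∧
      Ω ∩ ball p ε = {X ∈ ball p ε | f (xpart n (g X)) < tcoord n (g X)}

/-- A set `ω ⊆ ℝⁿ` has `C¹` boundary: near each boundary point it is the sublevel set
of a `C¹` defining function with nonvanishing gradient. -/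
def HasC1Boundary (n : ℕ) (ω : Set (Rn n)) : Prop :=
  ∀ p ∈ frontier ω, ∃ (f : Rn n → ℝ) (U : Set (Rn n)), IsOpen U ∧ p ∈ U ∧
    ContDiffOn ℝ 1 f U ∧ (∀ q ∈ U, fderiv ℝ f q ≠ 0) ∧ ω ∩ U = {q ∈ U | f q < 0}

/-- Convergence `χ_{E_k} → χ_E` in `L¹_loc(ℝⁿ)`. -/
def TendstoL1loc (n : ℕ) (Ek : ℕ → Set (Rn n)) (E : Set (Rn n)) : Prop :=
  ∀ K : Set (Rn n), IsCompact K →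
    Tendsto (fun k => ∫ x in K,
        |(Ek k).indicator (fun _ => (1 : ℝ)) x - E.indicator (fun _ => (1 : ℝ)) x|)
      atTop (nhds 0)

/-- The quantity `M(ϑ,s)` appearing in the fractional Young law. -/
def Mfun (ϑ s : ℝ) : ℝ :=
  2 * ∫ r in Ioi (0 : ℝ), ∫ t in Ioo (0 : ℝ) ϑ,
      r * (r ^ 2 + 2 * r * Real.cos t + 1) ^ (-((2 + s) / 2))

/-!
Compare `E_k` with the competitor `F_k = (E ∩ B) ∪ (E_k \ B)`, which coincides with `E_k` outside
`B`. Minimality of `E_k` bounds its localized interaction by that of `F_k`, and the latter differs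
from the localized interaction of `E` by at most twice `𝓘_s((E ∆ E_k) \ B, B)` plus `|σ|` times the
wetting term `𝓘_s((E ∆ E_k) ∩ B ∩ H, Hᶜ)`. Since `s < 1`, both `𝓘_s(B, Bᶜ)` and `𝓘_s(B ∩ H, Hᶜ)` are
finite, so the two error terms are integrals of fixed integrable densities over `E ∆ E_k`, and they
tend to zero by `L¹_loc` convergence.
-/

open scoped Topology symmDiff

section NormedSpace

variable {E : Type*} [NormedAddCommGroup E] [NormedSpace ℝ E] [FiniteDimensional ℝ E]
  [Nontrivial E] [MeasurableSpace E] [BorelSpace E] (μ : Measure E) [μ.IsAddHaarMeasure]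

local notation "dim" => Module.finrank ℝ

theorem lintegral_norm_rpow_neg_compl_ball {s t : ℝ} (hs : 0 < s) (ht : 0 < t) :
    ∫⁻ z in (ball (0 : E) t)ᶜ, ENNReal.ofReal (‖z‖ ^ (-((dim E : ℝ) + s))) ∂μ =
      ENNReal.ofReal (dim E * μ.real (ball 0 1) * (t ^ (-s) / s)) := by
  set f : ℝ → ℝ := (Ici t).indicator fun y => y ^ (-((dim E : ℝ) + s))
  have hdim : 1 ≤ dim E := Module.finrank_pos
  -- radial density in polar coordinates: `y ^ (dim E - 1) * y ^ (-(dim E + s)) = y ^ (-s - 1)`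
  have hpolar : EqOn (fun y : ℝ => y ^ (dim E - 1) • f y)
      ((Ici t).indicator fun y => y ^ (-s - 1)) (Ioi 0) := by
    intro y (hy : 0 < y)
    by_cases hyt : y ∈ Ici t
    · simp only [f, indicator_of_mem hyt, smul_eq_mul]
      rw [← Real.rpow_natCast, ← Real.rpow_add hy, Nat.cast_sub hdim]
      ring_nf
    · simp [f, indicator_of_notMem hyt]
  have hint_t : Integrable ((Ici t).indicator fun y : ℝ => y ^ (-s - 1)) :=
    (integrable_indicator_iff measurableSet_Ici).mpr
      ((integrableOn_Ioi_rpow_of_lt (by linarith) ht).congr_set_ae Ioi_ae_eq_Ici.symm)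
  have hint : Integrable (fun z : E => f ‖z‖) μ := by
    rw [integrable_fun_norm_addHaar, integrableOn_congr_fun hpolar measurableSet_Ioi]
    exact hint_t.restrict
  have hf : (ball (0 : E) t)ᶜ.indicator (fun z => ENNReal.ofReal (‖z‖ ^ (-((dim E : ℝ) + s)))) =
      fun z => ENNReal.ofReal (f ‖z‖) := by
    ext z
    by_cases hz : z ∈ (ball (0 : E) t)ᶜ
    · have : ‖z‖ ∈ Ici t := by simpa using hz
      simp [f, indicator_of_mem hz, indicator_of_mem this]
    · have : ‖z‖ ∉ Ici t := by simpa using hz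
      simp [f, indicator_of_notMem hz, indicator_of_notMem this]
  rw [← lintegral_indicator measurableSet_ball.compl, hf,
    ← ofReal_integral_eq_lintegral_ofReal hint
      (ae_of_all _ fun z => indicator_nonneg (fun y (hy : t ≤ y) =>
        Real.rpow_nonneg (ht.le.trans hy) _) _),
    integral_fun_norm_addHaar, setIntegral_congr_fun measurableSet_Ioi hpolar,
    integral_indicator measurableSet_Ici,
    Measure.restrict_restrict measurableSet_Ici, inter_eq_left.mpr (Ici_subset_Ioi.mpr ht),
    integral_Ici_eq_integral_Ioi, integral_Ioi_rpow_of_lt (by linarith) ht]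
  congr 1
  simp only [nsmul_eq_mul, smul_eq_mul, sub_add_cancel]
  ring

theorem setLIntegral_norm_sub_rpow_neg_le {s t : ℝ} (hs : 0 < s) (ht : 0 < t) (x : E)
    {T : Set E} (hT : ∀ y ∈ T, t ≤ ‖x - y‖) :
    ∫⁻ y in T, ENNReal.ofReal (‖x - y‖ ^ (-((dim E : ℝ) + s))) ∂μ ≤
      ENNReal.ofReal (dim E * μ.real (ball 0 1) * (t ^ (-s) / s)) := by
  set g : E → ℝ≥0∞ := fun z => ENNReal.ofReal (‖z‖ ^ (-((dim E : ℝ) + s)))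
  have hshift : ∀ y, (ball x t)ᶜ.indicator (fun y => g (x - y)) y =
      (ball (0 : E) t)ᶜ.indicator g (x - y) := by
    intro y
    simp only [indicator, mem_compl_iff, mem_ball, dist_eq_norm, sub_zero, norm_sub_rev y x]
  calc ∫⁻ y in T, g (x - y) ∂μ
      ≤ ∫⁻ y in (ball x t)ᶜ, g (x - y) ∂μ := lintegral_mono_set fun y hy => by
        simpa [dist_eq_norm, norm_sub_rev] using hT y hy
    _ = ∫⁻ z in (ball (0 : E) t)ᶜ, g z ∂μ := by
        rw [← lintegral_indicator measurableSet_ball.compl,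
          ← lintegral_indicator measurableSet_ball.compl, lintegral_congr hshift,
          lintegral_sub_left_eq_self]
    _ = _ := lintegral_norm_rpow_neg_compl_ball μ hs ht

theorem addHaar_ball_diff_ball_le {a R : ℝ} (ha : 0 ≤ a) (haR : a ≤ R) :
    μ (ball (0 : E) R \ ball 0 a) ≤
      μ (ball 0 1) * ENNReal.ofReal (dim E * R ^ (dim E - 1)) * ENNReal.ofReal (R - a) := by
  have h := abs_pow_sub_pow_le R a (dim E)
  rw [abs_of_nonneg (sub_nonneg.mpr (pow_le_pow_left₀ ha haR _)), abs_of_nonneg (by linarith),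
    abs_of_nonneg ha, abs_of_nonneg (ha.trans haR), max_eq_left haR] at h
  rw [measure_sdiff (ball_subset_ball haR) measurableSet_ball.nullMeasurableSet
      measure_ball_lt_top.ne, Measure.addHaar_ball μ 0 (ha.trans haR), Measure.addHaar_ball μ 0 ha,
    ← ENNReal.sub_mul fun _ _ => measure_ball_lt_top.ne, ← ENNReal.ofReal_sub _ (by positivity),
    mul_assoc, ← ENNReal.ofReal_mul (by have := ha.trans haR; positivity), mul_comm]
  gcongr
  linarith

end NormedSpace

theorem setLIntegral_rpow_neg_lt_top {α : Type*} [MeasurableSpace α] (μ : Measure α)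
    {S : Set α} (hS : MeasurableSet S) (hμS : μ S ≠ ⊤) {d : α → ℝ} (hd : Measurable d)
    (hd_pos : ∀ x ∈ S, 0 < d x) {C : ℝ≥0∞} (hC : C ≠ ⊤)
    (hslab : ∀ h, 0 < h → μ (S ∩ {x | d x < h}) ≤ C * ENNReal.ofReal h)
    {s : ℝ} (hs0 : 0 < s) (hs1 : s < 1) :
    ∫⁻ x in S, ENNReal.ofReal (d x ^ (-s)) ∂μ < ⊤ := by
  have hlevel : ∀ u, 0 < u →
      μ.restrict S {x | u < d x ^ (-s)} = μ (S ∩ {x | d x < u ^ (-s)⁻¹}) := by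
    intro u hu
    rw [Measure.restrict_apply' hS, inter_comm]
    congr 1
    ext x
    simp only [mem_inter_iff, mem_ofPred_eq, and_congr_right_iff]
    exact fun hx => (Real.lt_rpow_inv_iff_of_neg (hd_pos x hx) hu (by linarith)).symm
  rw [lintegral_eq_lintegral_meas_lt _
      (ae_restrict_of_forall_mem hS fun x hx => Real.rpow_nonneg (hd_pos x hx).le _)
      (hd.pow_const _).aemeasurable,
    ← Ioc_union_Ioi_eq_Ioi zero_le_one]
  refine (lintegral_union_le _ _ _).trans_lt (ENNReal.add_lt_top.mpr ⟨?_, ?_⟩)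
  · calc ∫⁻ u in Ioc 0 1, μ.restrict S {x | u < d x ^ (-s)}
        ≤ ∫⁻ _ in Ioc (0 : ℝ) 1, μ S :=
          lintegral_mono fun u =>
            (measure_mono (subset_univ _)).trans_eq (Measure.restrict_apply_univ S)
      _ < ⊤ := by simpa using hμS.lt_top
  · have hexp : (-s)⁻¹ < -1 := by
      rw [inv_neg, neg_lt_neg_iff]
      exact (one_lt_inv₀ hs0).mpr hs1
    calc ∫⁻ u in Ioi 1, μ.restrict S {x | u < d x ^ (-s)}
        ≤ ∫⁻ u in Ioi 1, C * ENNReal.ofReal (u ^ (-s)⁻¹) := by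
          refine setLIntegral_mono (by fun_prop) fun u (hu : 1 < u) => ?_
          rw [hlevel u (by linarith)]
          exact hslab _ (Real.rpow_pos_of_pos (by linarith) _)
      _ = C * ENNReal.ofReal (∫ u in Ioi 1, u ^ (-s)⁻¹) := by
          rw [lintegral_const_mul _ (by fun_prop), ofReal_integral_eq_lintegral_ofReal
            (integrableOn_Ioi_rpow_of_lt hexp one_pos)
            (ae_restrict_of_forall_mem measurableSet_Ioi fun u (hu : 1 < u) =>
              Real.rpow_nonneg (by linarith) _)]
      _ < ⊤ := ENNReal.mul_lt_top hC.lt_top ENNReal.ofReal_lt_top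

theorem tendsto_setLIntegral_zero_of_tendsto_measure_inter_compact {α ι : Type*}
    [TopologicalSpace α] [SigmaCompactSpace α] [T2Space α] [MeasurableSpace α]
    [OpensMeasurableSpace α] {μ : Measure α} {f : α → ℝ≥0∞} (hf : ∫⁻ x, f x ∂μ ≠ ⊤)
    {l : Filter ι} {D : ι → Set α}
    (hD : ∀ K, IsCompact K → Tendsto (fun i => μ (D i ∩ K)) l (𝓝 0)) :
    Tendsto (fun i => ∫⁻ x in D i, f x ∂μ) l (𝓝 0) := by
  set K : ℕ → Set α := compactCovering α
  have hK : ∀ m, MeasurableSet (K m) := fun m => (isCompact_compactCovering α m).measurableSet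
  have htail : Tendsto (fun m => μ.withDensity f (K m)ᶜ) atTop (𝓝 0) := by
    have h := tendsto_measure_iInter_atTop (μ := μ.withDensity f)
      (fun m => (hK m).compl.nullMeasurableSet)
      (fun m m' hmm' => compl_subset_compl.mpr (compactCovering_subset α hmm'))
      ⟨0, by
        rw [withDensity_apply _ (hK 0).compl]
        exact ((setLIntegral_le_lintegral _ _).trans_lt hf.lt_top).ne⟩
    rwa [← compl_iUnion, iUnion_compactCovering, compl_univ, measure_empty] at h
  rw [ENNReal.tendsto_nhds_zero]
  intro ε hε
  obtain ⟨m, hm⟩ := (ENNReal.tendsto_nhds_zero.mp htail (ε / 2)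
    (ENNReal.half_pos hε.ne')).exists
  rw [withDensity_apply _ (hK m).compl] at hm
  have hDK := ENNReal.tendsto_nhds_zero.mp
    (tendsto_setLIntegral_zero hf (hD _ (isCompact_compactCovering α m))) (ε / 2)
    (ENNReal.half_pos hε.ne')
  filter_upwards [hDK] with i hi
  calc ∫⁻ x in D i, f x ∂μ
      ≤ ∫⁻ x in (D i ∩ K m) ∪ (K m)ᶜ, f x ∂μ :=
        lintegral_mono_set fun x hx => by by_cases hxK : x ∈ K m <;> simp [hx, hxK]
    _ ≤ ε / 2 + ε / 2 := (lintegral_union_le _ _ _).trans (add_le_add hi hm)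
    _ = ε := ENNReal.add_halves ε

theorem limsup_le_of_le_add_of_tendsto_zero {ι : Type*} {l : Filter ι} [l.NeBot]
    {a e : ι → ℝ} {b c : ℝ} (ha : ∀ i, b ≤ a i) (h : ∀ i, a i ≤ c + e i)
    (he : Tendsto e l (𝓝 0)) : limsup a l ≤ c := by
  have hce : Tendsto (fun i => c + e i) l (𝓝 c) := by simpa using tendsto_const_nhds.add he
  calc limsup a l ≤ limsup (fun i => c + e i) l :=
        limsup_le_limsup (.of_forall h) (isCoboundedUnder_le_of_le l ha) hce.isBoundedUnder_le
    _ = c := hce.limsup_eq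

theorem volume_ball_inter_coord_mem_Ioo_le {n : ℕ} (i : Fin n) (R h : ℝ) :
    volume (ball (0 : Rn n) R ∩ {x | x i ∈ Ioo 0 h}) ≤
      ENNReal.ofReal (2 * R) ^ (n - 1) * ENNReal.ofReal h := by
  set I : Fin n → Set ℝ := Function.update (fun _ => Ioo (-R) R) i (Ioo 0 h)
  have hbox : WithLp.toLp 2 ⁻¹' (ball (0 : Rn n) R ∩ {x | x i ∈ Ioo 0 h}) ⊆ univ.pi I := by
    rintro f ⟨hfR, hfi⟩ j -
    rcases eq_or_ne j i with rfl | hji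
    · simpa [I] using hfi
    · have hj : |f j| < R := (PiLp.norm_apply_le (WithLp.toLp 2 f) j).trans_lt
        (mem_ball_zero_iff.mp hfR)
      simpa [I, hji] using abs_lt.mp hj
  calc volume (ball (0 : Rn n) R ∩ {x | x i ∈ Ioo 0 h})
      = volume (WithLp.toLp 2 ⁻¹' (ball (0 : Rn n) R ∩ {x | x i ∈ Ioo 0 h})) :=
        ((PiLp.volume_preserving_toLp (Fin n)).measure_preimage
          (measurableSet_ball.inter (measurableSet_Ioo.preimage
            (by fun_prop))).nullMeasurableSet).symm
    _ ≤ volume (univ.pi I) := measure_mono hbox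
    _ = ENNReal.ofReal (2 * R) ^ (n - 1) * ENNReal.ofReal h := by
        have hI : ∀ j ∈ Finset.univ.erase i, volume (I j) = volume (Ioo (-R) R) :=
          fun j hj => by simp [I, Finset.ne_of_mem_erase hj]
        rw [volume_pi_pi, ← Finset.mul_prod_erase _ _ (Finset.mem_univ i),
          Finset.prod_congr rfl hI]
        simp only [I, Function.update_self, Real.volume_Ioo, Finset.prod_const,
          Finset.card_erase_of_mem (Finset.mem_univ i), Finset.card_univ, Fintype.card_fin]
        ring_nf

theorem lastCoord_eq {n : ℕ} (hn : 0 < n) (x : Rn n) :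
    lastCoord n x = x ⟨n - 1, Nat.sub_lt hn one_pos⟩ :=
  dif_pos hn

theorem measurable_lastCoord (n : ℕ) : Measurable (lastCoord n) := by
  unfold lastCoord
  split_ifs <;> fun_prop

theorem measurableSet_halfSpace (n : ℕ) : MeasurableSet (halfSpace n) :=
  measurable_lastCoord n measurableSet_Ioi

theorem TendstoL1loc.tendsto_measure_symmDiff_inter {n : ℕ} {Ek : ℕ → Set (Rn n)}
    {E : Set (Rn n)} (h : TendstoL1loc n Ek E) (hE : MeasurableSet E)
    (hEk : ∀ k, MeasurableSet (Ek k)) {K : Set (Rn n)} (hK : IsCompact K) :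
    Tendsto (fun k => volume ((E ∆ Ek k) ∩ K)) atTop (𝓝 0) := by
  have hint : ∀ k, ∫ x in K, |(Ek k).indicator (fun _ => (1 : ℝ)) x -
      E.indicator (fun _ => (1 : ℝ)) x| = volume.real ((E ∆ Ek k) ∩ K) := by
    intro k
    have hpt : ∀ x, |(Ek k).indicator (fun _ => (1 : ℝ)) x - E.indicator (fun _ => (1 : ℝ)) x| =
        (E ∆ Ek k).indicator 1 x := fun x => by
      rw [abs_sub_comm, ← apply_indicator_symmDiff abs_neg,
        abs_of_nonneg (indicator_nonneg (fun _ _ => zero_le_one) x)]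
      rfl
    rw [integral_congr_ae (ae_of_all _ hpt), integral_indicator_one (hE.symmDiff (hEk k)),
      measureReal_restrict_apply (hE.symmDiff (hEk k))]
  have hfin : ∀ k, volume ((E ∆ Ek k) ∩ K) ≠ ⊤ :=
    fun k => ((measure_mono inter_subset_right).trans_lt hK.measure_lt_top).ne
  rw [← ENNReal.tendsto_toReal_iff hfin ENNReal.zero_ne_top]
  simpa [hint, Measure.real] using h K hK

section Interaction

variable {n : ℕ} {s : ℝ}

theorem frI_eq (A B : Set (Rn n)) :
    frI n s A B = ∫⁻ x in A, ∫⁻ y in B, ENNReal.ofReal (‖x - y‖ ^ (-((n : ℝ) + s))) := by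
  rw [frI, Measure.volume_eq_prod, ← Measure.prod_restrict]
  exact lintegral_prod _ (by fun_prop)

theorem frI_comm (A B : Set (Rn n)) : frI n s A B = frI n s B A := by
  rw [frI_eq, frI_eq, lintegral_lintegral_swap (by fun_prop)]
  simp only [norm_sub_rev]

theorem frI_mono {A A' B B' : Set (Rn n)} (hA : A ⊆ A') (hB : B ⊆ B') :
    frI n s A B ≤ frI n s A' B' :=
  lintegral_mono_set (prod_mono hA hB)

theorem frI_le_add_of_subset_union_left {A A₁ A₂ : Set (Rn n)} (hA : A ⊆ A₁ ∪ A₂)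
    (B : Set (Rn n)) : frI n s A B ≤ frI n s A₁ B + frI n s A₂ B := by
  refine (frI_mono hA subset_rfl).trans ?_
  rw [frI, union_prod]
  exact lintegral_union_le _ _ _

theorem frI_le_add_of_subset_union_right (A : Set (Rn n)) {B B₁ B₂ : Set (Rn n)}
    (hB : B ⊆ B₁ ∪ B₂) : frI n s A B ≤ frI n s A B₁ + frI n s A B₂ := by
  rw [frI_comm, frI_comm A B₁, frI_comm A B₂]
  exact frI_le_add_of_subset_union_left hB A

theorem frI_inter_ne_top {A A' C : Set (Rn n)} (h : frI n s (A ∩ C) (A' ∩ C) ≠ ⊤)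
    (hC : frI n s C Cᶜ ≠ ⊤) : frI n s (A ∩ C) A' ≠ ⊤ := by
  refine ne_top_of_le_ne_top (ENNReal.add_ne_top.mpr ⟨h, hC⟩) ?_
  calc frI n s (A ∩ C) A'
      ≤ frI n s (A ∩ C) (A' ∩ C) + frI n s (A ∩ C) Cᶜ :=
        frI_le_add_of_subset_union_right _ fun x hx => by
          by_cases hxC : x ∈ C
          exacts [.inl ⟨hx, hxC⟩, .inr hxC]
    _ ≤ frI n s (A ∩ C) (A' ∩ C) + frI n s C Cᶜ := by
        gcongr
        exact frI_mono inter_subset_right subset_rfl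

theorem abs_frIr_sub_le {A A' D T : Set (Rn n)} (h : A ⊆ A' ∪ D) (h' : A' ⊆ A ∪ D)
    (hA : frI n s A T ≠ ⊤) (hA' : frI n s A' T ≠ ⊤) (hD : frI n s D T ≠ ⊤) :
    |frIr n s A T - frIr n s A' T| ≤ frIr n s D T := by
  have h₁ := ENNReal.toReal_le_add (frI_le_add_of_subset_union_left h T) hA' hD
  have h₂ := ENNReal.toReal_le_add (frI_le_add_of_subset_union_left h' T) hA hD
  exact abs_sub_le_iff.mpr ⟨by unfold frIr; linarith, by unfold frIr; linarith⟩

theorem tendsto_frI_inter_zero {ι : Type*} {l : Filter ι} {S T : Set (Rn n)}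
    (hST : frI n s S T ≠ ⊤) {D : ι → Set (Rn n)} (hD : ∀ i, MeasurableSet (D i))
    (hDK : ∀ K, IsCompact K → Tendsto (fun i => volume (D i ∩ K)) l (𝓝 0)) :
    Tendsto (fun i => frI n s (D i ∩ S) T) l (𝓝 0) := by
  simp only [frI_eq, ← Measure.restrict_restrict (hD _)]
  refine tendsto_setLIntegral_zero_of_tendsto_measure_inter_compact (by rwa [frI_eq] at hST)
    fun K hK => tendsto_of_tendsto_of_tendsto_of_le_of_le tendsto_const_nhds (hDK K hK)
      (fun _ => bot_le) fun _ => Measure.restrict_le_self _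

theorem frI_lt_top_of_le_dist (hn : 0 < n) (hs0 : 0 < s) (hs1 : s < 1) {S T : Set (Rn n)}
    (hS : MeasurableSet S) (hS_fin : volume S ≠ ⊤) {d : Rn n → ℝ} (hd : Measurable d)
    (hd_pos : ∀ x ∈ S, 0 < d x) (hdist : ∀ x ∈ S, ∀ y ∈ T, d x ≤ ‖x - y‖)
    {C : ℝ≥0∞} (hC : C ≠ ⊤)
    (hslab : ∀ h, 0 < h → volume (S ∩ {x | d x < h}) ≤ C * ENNReal.ofReal h) :
    frI n s S T < ⊤ := by
  have : NeZero n := ⟨hn.ne'⟩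
  set c : ℝ := n * volume.real (ball (0 : Rn n) 1) / s
  have hinner : ∀ x ∈ S, ∫⁻ y in T, ENNReal.ofReal (‖x - y‖ ^ (-((n : ℝ) + s))) ≤
      ENNReal.ofReal c * ENNReal.ofReal (d x ^ (-s)) := by
    intro x hx
    have h := setLIntegral_norm_sub_rpow_neg_le volume hs0 (hd_pos x hx) x (hdist x hx)
    rw [finrank_euclideanSpace_fin] at h
    rw [← ENNReal.ofReal_mul (by positivity)]
    convert h using 2
    ring
  rw [frI_eq]
  calc ∫⁻ x in S, ∫⁻ y in T, ENNReal.ofReal (‖x - y‖ ^ (-((n : ℝ) + s)))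
      ≤ ∫⁻ x in S, ENNReal.ofReal c * ENNReal.ofReal (d x ^ (-s)) :=
        setLIntegral_mono_ae (by fun_prop) (ae_of_all _ hinner)
    _ < ⊤ := by
        rw [lintegral_const_mul _ (by fun_prop)]
        exact ENNReal.mul_lt_top ENNReal.ofReal_lt_top
          (setLIntegral_rpow_neg_lt_top volume hS hS_fin hd hd_pos hC hslab hs0 hs1)

theorem frI_ball_compl_lt_top (hn : 0 < n) (hs0 : 0 < s) (hs1 : s < 1) {R : ℝ} (hR : 0 < R) :
    frI n s (ball 0 R) (ball 0 R)ᶜ < ⊤ := by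
  refine frI_lt_top_of_le_dist hn hs0 hs1 measurableSet_ball measure_ball_lt_top.ne
    (d := fun x => R - ‖x‖) (by fun_prop) (fun x hx => sub_pos.mpr (mem_ball_zero_iff.mp hx))
    (fun x _ y hy => ?_) (C := volume (ball (0 : Rn n) 1) * ENNReal.ofReal (n * R ^ (n - 1)))
    (ENNReal.mul_ne_top measure_ball_lt_top.ne ENNReal.ofReal_ne_top) fun h hh => ?_
  · have hy : R ≤ ‖y‖ := by simpa using hy
    linarith [norm_sub_norm_le y x, norm_sub_rev x y]
  · have : NeZero n := ⟨hn.ne'⟩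
    have hsub : ball (0 : Rn n) R ∩ {x | R - ‖x‖ < h} ⊆
        ball 0 R \ ball 0 (max (R - h) 0) := by
      rintro x ⟨hxR, hxh⟩
      refine ⟨hxR, fun hx => ?_⟩
      rw [mem_ball_zero_iff, lt_max_iff] at hx
      simp only [mem_ofPred_eq] at hxh
      rcases hx with hx | hx <;> linarith [norm_nonneg x]
    calc volume (ball (0 : Rn n) R ∩ {x | R - ‖x‖ < h})
        ≤ volume (ball (0 : Rn n) R \ ball 0 (max (R - h) 0)) := measure_mono hsub
      _ ≤ _ := by
        have hshell := addHaar_ball_diff_ball_le (volume : Measure (Rn n)) (le_max_right (R - h) 0)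
          (max_le (by linarith) hR.le)
        rw [finrank_euclideanSpace_fin] at hshell
        refine hshell.trans ?_
        gcongr
        linarith [le_max_left (R - h) 0]

theorem frI_ball_inter_halfSpace_compl_lt_top (hn : 0 < n) (hs0 : 0 < s) (hs1 : s < 1) (R : ℝ) :
    frI n s (ball 0 R ∩ halfSpace n) (halfSpace n)ᶜ < ⊤ := by
  set i : Fin n := ⟨n - 1, Nat.sub_lt hn one_pos⟩
  refine frI_lt_top_of_le_dist hn hs0 hs1 (measurableSet_ball.inter (measurableSet_halfSpace n))
    ((measure_mono inter_subset_left).trans_lt measure_ball_lt_top).ne (measurable_lastCoord n)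
    (fun x hx => hx.2) (fun x _ y hy => ?_) (C := ENNReal.ofReal (2 * R) ^ (n - 1))
    (ENNReal.pow_ne_top ENNReal.ofReal_ne_top) fun h _ => ?_
  · have hy : lastCoord n y ≤ 0 := not_lt.mp hy
    rw [lastCoord_eq hn] at hy ⊢
    calc x i ≤ (x - y) i := by simp only [PiLp.sub_apply]; linarith
      _ ≤ ‖x - y‖ := (le_abs_self _).trans (PiLp.norm_apply_le (x - y) i)
  · refine (measure_mono ?_).trans (volume_ball_inter_coord_mem_Ioo_le i R h)
    rintro x ⟨⟨hxR, hx0⟩, hxh⟩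
    simp only [halfSpace, mem_ofPred_eq, lastCoord_eq hn] at hx0 hxh
    exact ⟨hxR, hx0, hxh⟩

end Interaction

def localPer (n : ℕ) (s : ℝ) (E : Set (Rn n)) (R : ℝ) : ℝ :=
  frIr n s (E ∩ ball 0 R) (Eᶜ ∩ halfSpace n)
    + frIr n s (E ∩ (ball 0 R)ᶜ) (Eᶜ ∩ ball 0 R ∩ halfSpace n)

theorem LocalMin.localPer_le_splice {n : ℕ} {s σ R : ℝ} {E E' : Set (Rn n)}
    (hE'min : LocalMin n s σ E') (hR : 0 < R) (hE : MeasurableSet E) (hE' : MeasurableSet E')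
    (hEH : E ⊆ halfSpace n) (hE'H : E' ⊆ halfSpace n) :
    localPer n s E' R + σ * frIr n s (E' ∩ ball 0 R) (halfSpace n)ᶜ ≤
      frIr n s (E ∩ ball 0 R) (((E ∩ ball 0 R) ∪ (E' \ ball 0 R))ᶜ ∩ halfSpace n)
        + frIr n s (E' ∩ (ball 0 R)ᶜ) (Eᶜ ∩ ball 0 R ∩ halfSpace n)
        + σ * frIr n s (E ∩ ball 0 R) (halfSpace n)ᶜ := by
  set B : Set (Rn n) := ball 0 R
  set F := (E ∩ B) ∪ (E' \ B)
  have hF : ∀ x, x ∈ F ↔ x ∈ E ∧ x ∈ B ∨ x ∈ E' ∧ x ∉ B := fun x => Iff.rfl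
  have hmin := (hE'min R hR).2 F ((hE.inter measurableSet_ball).union
    (hE'.diff measurableSet_ball)) (union_subset (inter_subset_left.trans hEH)
      (sdiff_subset.trans hE'H)) (by ext x; simp only [Set.mem_sdiff, hF]; tauto)
  have hFB : F ∩ B = E ∩ B := by ext x; simp only [mem_inter_iff, hF]; tauto
  have hFBc : F ∩ Bᶜ = E' ∩ Bᶜ := by ext x; simp only [mem_inter_iff, mem_compl_iff, hF]; tauto
  have hFcB : Fᶜ ∩ B = Eᶜ ∩ B := by ext x; simp only [mem_inter_iff, mem_compl_iff, hF]; tauto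
  rwa [hFB, hFBc, hFcB] at hmin

theorem localPer_le_of_localMin {n : ℕ} {s σ R : ℝ} (hR : 0 < R) {E E' : Set (Rn n)}
    (hE : MeasurableSet E) (hE' : MeasurableSet E') (hEH : E ⊆ halfSpace n)
    (hE'H : E' ⊆ halfSpace n) (hE'min : LocalMin n s σ E')
    (hball : frI n s (ball 0 R) (ball 0 R)ᶜ ≠ ⊤)
    (hwet : frI n s (ball 0 R ∩ halfSpace n) (halfSpace n)ᶜ ≠ ⊤)
    (hEfin : frI n s (E ∩ ball 0 R) (Eᶜ ∩ halfSpace n) ≠ ⊤) :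
    localPer n s E' R ≤ localPer n s E R + 2 * frIr n s ((E ∆ E') ∩ (ball 0 R)ᶜ) (ball 0 R)
      + |σ| * frIr n s ((E ∆ E') ∩ (ball 0 R ∩ halfSpace n)) (halfSpace n)ᶜ := by
  have hmin := hE'min.localPer_le_splice hR hE hE' hEH hE'H
  set B : Set (Rn n) := ball 0 R
  set H := halfSpace n
  set D := E ∆ E'
  have hD : ∀ x, x ∈ D ↔ x ∈ E ∧ x ∉ E' ∨ x ∈ E' ∧ x ∉ E := fun x => mem_symmDiff
  have hball' : frI n s Bᶜ B ≠ ⊤ := by rwa [frI_comm]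
  have hD_fin : frI n s (D ∩ Bᶜ) B ≠ ⊤ :=
    ne_top_of_le_ne_top hball' (frI_mono inter_subset_right subset_rfl)
  have hF_out : frI n s (E ∩ B) (((E ∩ B) ∪ (E' \ B))ᶜ ∩ H) ≤
      frI n s (E ∩ B) (Eᶜ ∩ H) + frI n s (D ∩ Bᶜ) B := by
    refine (frI_le_add_of_subset_union_right _ (B₁ := Eᶜ ∩ H) (B₂ := D ∩ Bᶜ) ?_).trans ?_
    · intro x; simp only [mem_inter_iff, mem_compl_iff, mem_union, Set.mem_sdiff, hD]; tauto
    · rw [frI_comm (E ∩ B) (D ∩ Bᶜ)]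
      gcongr
      exact frI_mono subset_rfl inter_subset_right
  have hE'_out : frI n s (E' ∩ Bᶜ) (Eᶜ ∩ B ∩ H) ≤
      frI n s (E ∩ Bᶜ) (Eᶜ ∩ B ∩ H) + frI n s (D ∩ Bᶜ) B := by
    refine (frI_le_add_of_subset_union_left (A₁ := E ∩ Bᶜ) (A₂ := D ∩ Bᶜ) ?_ _).trans ?_
    · intro x; simp only [mem_inter_iff, mem_compl_iff, mem_union, hD]; tauto
    · gcongr
      exact frI_mono subset_rfl fun x hx => hx.1.2
  have hwet_of : ∀ A ⊆ H, frI n s (A ∩ B) Hᶜ ≠ ⊤ := fun A hA =>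
    ne_top_of_le_ne_top hwet (frI_mono (fun x hx => ⟨hx.2, hA hx.1⟩) subset_rfl)
  have hwet_diff := abs_frIr_sub_le (A := E ∩ B) (A' := E' ∩ B) (D := D ∩ (B ∩ H)) (T := Hᶜ)
    (fun x => by have := @hEH x; simp only [mem_inter_iff, mem_union, hD]; tauto)
    (fun x => by have := @hE'H x; simp only [mem_inter_iff, mem_union, hD]; tauto)
    (hwet_of E hEH) (hwet_of E' hE'H)
    (ne_top_of_le_ne_top hwet (frI_mono inter_subset_right subset_rfl))
  have h₁ := ENNReal.toReal_le_add hF_out hEfin hD_fin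
  have h₂ := ENNReal.toReal_le_add hE'_out
    (ne_top_of_le_ne_top hball' (frI_mono inter_subset_right fun x hx => hx.1.2)) hD_fin
  have hσ : σ * frIr n s (E ∩ B) Hᶜ - σ * frIr n s (E' ∩ B) Hᶜ ≤
      |σ| * frIr n s (D ∩ (B ∩ H)) Hᶜ := by
    rw [← mul_sub]
    exact (le_abs_self _).trans ((abs_mul _ _).trans_le
      (mul_le_mul_of_nonneg_left hwet_diff (abs_nonneg σ)))
  unfold localPer frIr at *
  linarith

theorem stmt_15_general (n : ℕ) (hn : 2 ≤ n) (s σ : ℝ) (hs : s ∈ Set.Ioo (0 : ℝ) 1)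
    (r δ : ℝ) (hr : 0 < r) (hδ : 0 < δ)
    (E : Set (Rn n)) (hEmeas : MeasurableSet E) (hEH : E ⊆ halfSpace n)
    (hmin : LocalMin n s σ E)
    (Ek : ℕ → Set (Rn n)) (hEkmeas : ∀ k, MeasurableSet (Ek k))
    (hEkH : ∀ k, Ek k ⊆ halfSpace n) (hEkmin : ∀ k, LocalMin n s σ (Ek k))
    (hconv : TendstoL1loc n Ek E) :
    limsup (fun k =>
        frIr n s (Ek k ∩ ball 0 (r + δ)) ((Ek k)ᶜ ∩ halfSpace n)
          + frIr n s (Ek k ∩ (ball 0 (r + δ))ᶜ) ((Ek k)ᶜ ∩ ball 0 (r + δ) ∩ halfSpace n))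
      atTop
      ≤ frIr n s (E ∩ ball 0 (r + δ)) (Eᶜ ∩ halfSpace n)
        + frIr n s (E ∩ (ball 0 (r + δ))ᶜ) (Eᶜ ∩ ball 0 (r + δ) ∩ halfSpace n) := by
  obtain ⟨hs0, hs1⟩ := hs
  have hn0 : 0 < n := by omega
  have hR : 0 < r + δ := add_pos hr hδ
  have hball := (frI_ball_compl_lt_top hn0 hs0 hs1 hR).ne
  have hwet := (frI_ball_inter_halfSpace_compl_lt_top hn0 hs0 hs1 (r + δ)).ne
  have hEfin : frI n s (E ∩ ball 0 (r + δ)) (Eᶜ ∩ halfSpace n) ≠ ⊤ :=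
    ne_top_of_le_ne_top (frI_inter_ne_top (hmin _ hR).1.ne hball)
      (frI_mono subset_rfl inter_subset_left)
  have hD := fun k => hEmeas.symmDiff (hEkmeas k)
  have hDK := fun K (hK : IsCompact K) => hconv.tendsto_measure_symmDiff_inter hEmeas hEkmeas hK
  have hout := tendsto_frI_inter_zero (S := (ball 0 (r + δ))ᶜ) (by rwa [frI_comm]) hD hDK
  have hin := tendsto_frI_inter_zero hwet hD hDK
  refine limsup_le_of_le_add_of_tendsto_zero (b := 0)
    (fun k => add_nonneg ENNReal.toReal_nonneg ENNReal.toReal_nonneg)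
    (fun k => (localPer_le_of_localMin hR hEmeas (hEkmeas k) hEH (hEkH k) (hEkmin k) hball hwet
      hEfin).trans_eq (add_assoc _ _ _)) ?_
  simpa [frIr] using ((ENNReal.tendsto_toReal ENNReal.zero_ne_top).comp hout).const_mul 2 |>.add
    (((ENNReal.tendsto_toReal ENNReal.zero_ne_top).comp hin).const_mul |σ|)

/-- upper semicontinuity of localized interactions along minimizers. -/
theorem stmt_15 (n : ℕ) (hn : 2 ≤ n) (s σ : ℝ) (hs : s ∈ Set.Ioo (0 : ℝ) 1)
    (hσ : σ ∈ Set.Ioo (-1 : ℝ) 1) (r δ : ℝ) (hr : 0 < r) (hδ : 0 < δ)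
    (E : Set (Rn n)) (hEmeas : MeasurableSet E) (hEH : E ⊆ halfSpace n)
    (hmin : LocalMin n s σ E)
    (Ek : ℕ → Set (Rn n)) (hEkmeas : ∀ k, MeasurableSet (Ek k))
    (hEkH : ∀ k, Ek k ⊆ halfSpace n) (hEkmin : ∀ k, LocalMin n s σ (Ek k))
    (hconv : TendstoL1loc n Ek E) :
    limsup (fun k =>
        frIr n s (Ek k ∩ ball 0 (r + δ)) ((Ek k)ᶜ ∩ halfSpace n)
          + frIr n s (Ek k ∩ (ball 0 (r + δ))ᶜ) ((Ek k)ᶜ ∩ ball 0 (r + δ) ∩ halfSpace n))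
      atTop
      ≤ frIr n s (E ∩ ball 0 (r + δ)) (Eᶜ ∩ halfSpace n)
        + frIr n s (E ∩ (ball 0 (r + δ))ᶜ) (Eᶜ ∩ ball 0 (r + δ) ∩ halfSpace n) :=
  stmt_15_general n hn s σ hs r δ hr hδ E hEmeas hEH hmin Ek hEkmeas hEkH hEkmin hconv
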